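/- arXiv:0904.0177 — 2 statements merged into one kernel-verified Lean document; each statement's English description precedes it below -/
import Mathlib

section
/- Let a₀ ∈ Pₙ and h ∈ Sₙ, and define a(t) := a₀ · exp(t · a₀⁻¹ h) for t ∈ ℝ. Then a(t) is a symmetric positive definite matrix for every t ∈ ℝ, a(0) = a₀, a'(0) = h, and a satisfies the geodesic equation a''(t) = a'(t) · a(t)⁻¹ · a'(t) for all t ∈ ℝ. (These are the geodesics of the Riemannian metric ⟨·,·⟩ on Pₙ.) -/
open Matrix

noncomputable section

abbrev Mat (n : ℕ) : Type := Matrix (Fin n) (Fin n) ℝ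

instance (n : ℕ) : NormedAddCommGroup (Mat n) := Matrix.normedAddCommGroup
instance (n : ℕ) : NormedSpace ℝ (Mat n) := Matrix.normedSpace

/-- Membership in `Pₙ`: symmetric positive definite. -/
def InP (n : ℕ) (A : Mat n) : Prop := A.IsSymm ∧ A.PosDef

end

/-!
Write `X = a₀⁻¹ h`. Since `a₀` and `h` are symmetric, `Xᵀ = a₀ X a₀⁻¹`, so `exp (s X)ᵀ = a₀ exp (s X) a₀⁻¹`
and hence `a₀ exp (2 s X) = exp (s X)ᵀ a₀ exp (s X)`: every `a(t)` is congruent to `a₀` by an invertible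
matrix, hence positive definite. Differentiating gives `a' = a X` and `a'' = a X X = (a X) a⁻¹ (a X)`.
-/

open NormedSpace
open scoped ComplexOrder

namespace Matrix

variable {m 𝕂 : Type*} [Fintype m] [DecidableEq m] [RCLike 𝕂]

theorem mul_exp_two_mul_smul_inv_mul {A H : Matrix m m 𝕂} (hA : IsUnit A)
    (hAh : A.IsHermitian) (hH : H.IsHermitian) (s : ℝ) :
    A * exp ((2 * s) • (A⁻¹ * H)) = (exp (s • (A⁻¹ * H)))ᴴ * A * exp (s • (A⁻¹ * H)) := by
  have hdet : IsUnit A.det := (isUnit_iff_isUnit_det A).mp hA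
  have hconj : (s • (A⁻¹ * H))ᴴ = A * (s • (A⁻¹ * H)) * A⁻¹ := by
    rw [conjTranspose_smul, star_trivial, conjTranspose_mul, hH.eq, conjTranspose_nonsing_inv,
      hAh.eq, Matrix.mul_smul, Matrix.smul_mul, mul_nonsing_inv_cancel_left _ _ hdet]
  rw [← exp_conjTranspose, hconj, exp_conj _ _ hA, mul_assoc _ A⁻¹ A, nonsing_inv_mul _ hdet,
    mul_one, mul_assoc, ← exp_add_of_commute _ _ (Commute.refl _), ← add_smul, two_mul]

theorem PosDef.mul_exp_smul_inv_mul {A H : Matrix m m 𝕂} (hA : A.PosDef) (hH : H.IsHermitian)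
    (t : ℝ) : (A * exp (t • (A⁻¹ * H))).PosDef := by
  rw [← mul_div_cancel₀ t two_ne_zero, mul_exp_two_mul_smul_inv_mul hA.isUnit hA.isHermitian hH]
  exact hA.conjTranspose_mul_mul_same (mulVec_injective_iff_isUnit.mpr (isUnit_exp _))

section LinftyOpNorm

-- `exp` needs a normed algebra structure on matrices; the entrywise statement is independent of it.
attribute [local instance] Matrix.linftyOpNormedRing Matrix.linftyOpNormedAlgebra

theorem hasDerivAt_apply_mul_exp_smul_mul (B M C : Matrix m m 𝕂) (t : 𝕂) (i j : m) :
    HasDerivAt (fun u : 𝕂 => (B * exp (u • M) * C) i j) ((B * exp (t • M) * M * C) i j) t := by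
  have hexp := ((hasDerivAt_exp_smul_const (𝕂 := 𝕂) M t).const_mul B).mul_const C
  rw [← mul_assoc B] at hexp
  exact (entryLinearMap 𝕂 𝕂 i j).toContinuousLinearMap.hasFDerivAt.comp_hasDerivAt t hexp

end LinftyOpNorm

section SupNorm

attribute [local instance] Matrix.normedAddCommGroup Matrix.normedSpace

theorem hasDerivAt_mul_exp_smul_mul (B M C : Matrix m m 𝕂) (t : 𝕂) :
    HasDerivAt (fun u : 𝕂 => B * exp (u • M) * C) (B * exp (t • M) * M * C) t :=
  hasDerivAt_pi.mpr fun i => hasDerivAt_pi.mpr fun j =>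
    hasDerivAt_apply_mul_exp_smul_mul B M C t i j

end SupNorm

end Matrix

theorem stmt_0_general (n : ℕ) (a₀ h : Mat n) (ha₀ : InP n a₀) (hh : h.IsSymm)
    (a : ℝ → Mat n) (ha : ∀ t : ℝ, a t = a₀ * NormedSpace.exp (t • (a₀⁻¹ * h))) :
    (∀ t : ℝ, InP n (a t)) ∧ a 0 = a₀ ∧ deriv a 0 = h ∧
      ∀ t : ℝ, deriv (deriv a) t = deriv a t * (a t)⁻¹ * deriv a t := by
  obtain ⟨-, ha₀⟩ := ha₀
  set X : Mat n := a₀⁻¹ * h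
  have hpos (t : ℝ) : (a t).PosDef :=
    ha t ▸ ha₀.mul_exp_smul_inv_mul (isHermitian_iff_isSymm.mpr hh) t
  have hderiv (C : Mat n) (t : ℝ) : HasDerivAt (fun u => a u * C) (a t * X * C) t := by
    simp only [ha]
    exact hasDerivAt_mul_exp_smul_mul a₀ X C t
  have hda : deriv a = fun t => a t * X := by
    ext1 t
    have hd := hderiv 1 t
    simp only [_root_.mul_one] at hd
    exact hd.deriv
  have hdda (t : ℝ) : deriv (deriv a) t = a t * X * X := by
    rw [hda]
    exact (hderiv X t).deriv
  refine ⟨fun t => ⟨isHermitian_iff_isSymm.mp (hpos t).isHermitian, hpos t⟩, by simp [ha], ?_,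
    fun t => ?_⟩
  · simp only [hda, ha, zero_smul, exp_zero, mul_one]
    exact mul_nonsing_inv_cancel_left _ _ ((isUnit_iff_isUnit_det a₀).mp ha₀.isUnit)
  · rw [hdda, hda, mul_assoc (a t * X), nonsing_inv_mul_cancel_left _ _
      ((isUnit_iff_isUnit_det _).mp (hpos t).isUnit)]

/-- For `a₀ ∈ Pₙ`, `h ∈ Sₙ` and `a(t) := a₀ · exp(t · a₀⁻¹ h)`, the matrix `a(t)` is
symmetric positive definite for all `t`, `a(0) = a₀`, `a'(0) = h`, and `a` satisfies
the geodesic equation `a''(t) = a'(t) a(t)⁻¹ a'(t)`. -/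
theorem stmt_0 (n : ℕ) (hn : 1 ≤ n) (a₀ h : Mat n) (ha₀ : InP n a₀) (hh : h.IsSymm)
    (a : ℝ → Mat n) (ha : ∀ t : ℝ, a t = a₀ * NormedSpace.exp (t • (a₀⁻¹ * h))) :
    (∀ t : ℝ, InP n (a t)) ∧ a 0 = a₀ ∧ deriv a 0 = h ∧
      ∀ t : ℝ, deriv (deriv a) t = deriv a t * (a t)⁻¹ * deriv a t :=
  stmt_0_general n a₀ h ha₀ hh a ha
end

section
/- Let X be a compact topological space equipped with a finite Borel measure μ, let g : X → Pₙ and h : X → Pₙ be continuous, and let g₀ : X → Sₙ be continuous with g₀(x) positive semidefinite for all x. For t ∈ (0,1] set g_t(x) := g₀(x) + t·h(x). Then the improper integral ∫₀¹ ( ∫_X tr((g_t(x)⁻¹ h(x))²) · √(det(g(x)⁻¹ g_t(x))) dμ(x) )^{1/2} dt is finite. (This is the finiteness of the length of the linear path g_t = g₀ + t h joining a smooth semimetric on the boundary of the space of metrics to a metric.) -/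
open Matrix

noncomputable section

/-- The smallest (real) eigenvalue of a matrix. -/
def lamMin (n : ℕ) (A : Mat n) : ℝ := sInf (spectrum ℝ A)

/-- The largest (real) eigenvalue of a matrix. -/
def lamMax (n : ℕ) (A : Mat n) : ℝ := sSup (spectrum ℝ A)

end

open MeasureTheory

/-!
Put `g_t = g₀ + t • h` and `B = g_t^{-1/2} h g_t^{-1/2}`. Then `tr((g_t⁻¹ h)²) = tr(B²)` and
`det(g⁻¹ g_t) = det h / (det g · det B)`. By compactness there is `K` with `g₀ + h ≤ K • h`, so
`t • h ≤ g_t ≤ K • h` for `t ∈ (0,1]`, i.e. the eigenvalues `aᵢ` of `B` lie in `[K⁻¹, t⁻¹]`.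
Each term `aᵢ² / √(∏ⱼ aⱼ) ≤ K^{(n-1)/2} aᵢ^{3/2}` is then `O(t^{-3/2})` uniformly in `x`, so the
square root of the inner integral is `O(t^{-3/4})`, which is integrable on `(0,1]`.
-/

open Set
open scoped MatrixOrder ComplexOrder

theorem sq_div_sqrt_prod_le {ι : Type*} [Fintype ι] [DecidableEq ι] {a : ι → ℝ} {K T : ℝ}
    (hK : 0 < K) (hlow : ∀ i, K⁻¹ ≤ a i) (hup : ∀ i, a i ≤ T) (i : ι) :
    a i ^ 2 / √(∏ j, a j) ≤ √(K ^ (Fintype.card ι - 1)) * (T * √T) := by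
  have hpos : ∀ j, 0 < a j := fun j => (inv_pos.2 hK).trans_le (hlow j)
  have hprod : a i * K⁻¹ ^ (Fintype.card ι - 1) ≤ ∏ j, a j := by
    rw [← Finset.mul_prod_erase _ _ (Finset.mem_univ i)]
    refine mul_le_mul_of_nonneg_left ?_ (hpos i).le
    calc K⁻¹ ^ (Fintype.card ι - 1) = ∏ _j ∈ Finset.univ.erase i, K⁻¹ := by
          simp [Finset.card_erase_of_mem]
      _ ≤ ∏ j ∈ Finset.univ.erase i, a j :=
          Finset.prod_le_prod (fun _ _ => by positivity) fun j _ => hlow j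
  have hsqrt : √(a i * K⁻¹ ^ (Fintype.card ι - 1)) = √(a i) / √(K ^ (Fintype.card ι - 1)) := by
    rw [Real.sqrt_mul (hpos i).le, inv_pow, Real.sqrt_inv, div_eq_mul_inv]
  calc a i ^ 2 / √(∏ j, a j)
      ≤ a i ^ 2 / √(a i * K⁻¹ ^ (Fintype.card ι - 1)) := by
        gcongr
        exact Real.sqrt_pos.2 (mul_pos (hpos i) (by positivity))
    _ = √(K ^ (Fintype.card ι - 1)) * (a i * √(a i)) := by
        have := Real.sq_sqrt (hpos i).le
        have : 0 < √(a i) := Real.sqrt_pos.2 (hpos i)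
        have : 0 < √(K ^ (Fintype.card ι - 1)) := by positivity
        rw [hsqrt]
        field_simp
        nlinarith
    _ ≤ √(K ^ (Fintype.card ι - 1)) * (T * √T) := by
        gcongr
        · exact (hpos i).le.trans (hup i)
        · exact hup i
        · exact hup i

theorem sum_sq_div_sqrt_prod_le {ι : Type*} [Fintype ι] {a : ι → ℝ} {K T : ℝ} (hK : 0 < K)
    (hlow : ∀ i, K⁻¹ ≤ a i) (hup : ∀ i, a i ≤ T) :
    (∑ i, a i ^ 2) / √(∏ i, a i) ≤
      Fintype.card ι * √(K ^ (Fintype.card ι - 1)) * (T * √T) := by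
  classical
  rw [Finset.sum_div, mul_assoc]
  simpa using Finset.sum_le_sum fun i (_ : i ∈ Finset.univ) => sq_div_sqrt_prod_le hK hlow hup i

theorem sqrt_inv_mul_sqrt_inv {t : ℝ} (ht : 0 ≤ t) : √(t⁻¹ * √t⁻¹) = t ^ (-(3 / 4 : ℝ)) := by
  rw [Real.sqrt_eq_rpow, Real.sqrt_eq_rpow, ← Real.rpow_one_add' (inv_nonneg.2 ht) (by norm_num),
    ← Real.rpow_mul (inv_nonneg.2 ht), Real.inv_rpow ht, ← Real.rpow_neg ht]
  norm_num

theorem integrableOn_Ioc_sqrt_of_le {f : ℝ → ℝ} {C : ℝ} (hf : ContinuousOn f (Ioc 0 1))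
    (hle : ∀ t ∈ Ioc (0 : ℝ) 1, f t ≤ C * (t⁻¹ * √t⁻¹)) :
    IntegrableOn (fun t => √(f t)) (Ioc 0 1) := by
  have hbound : IntegrableOn (fun t : ℝ => √C * t ^ (-(3 / 4 : ℝ))) (Ioc 0 1) :=
    ((intervalIntegrable_iff_integrableOn_Ioc_of_le zero_le_one).1
      (intervalIntegral.intervalIntegrable_rpow' (by norm_num))).const_mul _
  refine hbound.mono' (Real.continuous_sqrt.comp_continuousOn hf |>.aestronglyMeasurable
    measurableSet_Ioc) ((ae_restrict_iff' measurableSet_Ioc).2 (ae_of_all _ fun t ht => ?_))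
  rw [Real.norm_of_nonneg (Real.sqrt_nonneg _), ← sqrt_inv_mul_sqrt_inv ht.1.le,
    ← Real.sqrt_mul' _ (by have := ht.1; positivity)]
  exact Real.sqrt_le_sqrt (hle t ht)

theorem ContinuousOn.matrix_inv {X ι R : Type*} [TopologicalSpace X] [Fintype ι] [DecidableEq ι]
    [Field R] [TopologicalSpace R] [IsTopologicalRing R] [ContinuousInv₀ R]
    {A : X → Matrix ι ι R} {s : Set X} (hA : ContinuousOn A s) (hdet : ∀ x ∈ s, (A x).det ≠ 0) :
    ContinuousOn (fun x => (A x)⁻¹) s := fun x hx =>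
  (continuousAt_matrix_inv _ (by rw [Ring.inverse_eq_inv']; exact continuousAt_inv₀ (hdet x hx))
    ).comp_continuousWithinAt (hA x hx)

namespace Matrix

section RCLike

variable {ι 𝕜 : Type*} [Fintype ι] [DecidableEq ι] [RCLike 𝕜] {A : Matrix ι ι 𝕜}

theorem IsHermitian.trace_mul_self (hA : A.IsHermitian) :
    (A * A).trace = ∑ i, (hA.eigenvalues i : 𝕜) ^ 2 := by
  conv_lhs => rw [hA.spectral_theorem, ← map_mul, Unitary.conjStarAlgAut_apply, trace_mul_cycle,
    Unitary.coe_star_mul_self, one_mul, diagonal_mul_diagonal, trace_diagonal]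
  simp [sq]

theorem IsHermitian.eigenvalues_le_of_le_smul_one (hA : A.IsHermitian) {r : ℝ}
    (h : A ≤ r • (1 : Matrix ι ι 𝕜)) (i : ι) : hA.eigenvalues i ≤ r := by
  rw [← Algebra.algebraMap_eq_smul_one, le_algebraMap_iff_spectrum_le hA.isSelfAdjoint] at h
  exact h _ (hA.eigenvalues_mem_spectrum_real i)

theorem IsHermitian.le_eigenvalues_of_smul_one_le (hA : A.IsHermitian) {r : ℝ}
    (h : r • (1 : Matrix ι ι 𝕜) ≤ A) (i : ι) : r ≤ hA.eigenvalues i := by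
  rw [← Algebra.algebraMap_eq_smul_one, algebraMap_le_iff_le_spectrum hA.isSelfAdjoint] at h
  exact h _ (hA.eigenvalues_mem_spectrum_real i)

theorem PosDef.exists_isHermitian_mul_mul_eq_one {g : Matrix ι ι 𝕜} (hg : g.PosDef) :
    ∃ P : Matrix ι ι 𝕜, P.IsHermitian ∧ P * g * P = 1 ∧ g⁻¹ = P * P := by
  set R := CFC.sqrt g
  have hRR : R * R = g := CFC.sqrt_mul_sqrt_self g hg.posSemidef.nonneg
  have hR : IsUnit R := (CFC.isUnit_sqrt_iff g hg.posSemidef.nonneg).2 hg.isUnit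
  have hRdet : IsUnit R.det := (isUnit_iff_isUnit_det R).1 hR
  refine ⟨R⁻¹, (CFC.sqrt_nonneg g).posSemidef.isHermitian.inv, ?_, ?_⟩
  · rw [← hRR, ← mul_assoc, nonsing_inv_mul _ hRdet, one_mul, mul_nonsing_inv _ hRdet]
  · rw [← hRR, mul_inv_rev]

end RCLike

theorem PosSemidef.add_smul_posDef {ι : Type*} {S H : Matrix ι ι ℝ} (hS : S.PosSemidef)
    (hH : H.PosDef) {t : ℝ} (ht : 0 < t) : (S + t • H).PosDef :=
  PosDef.posSemidef_add hS (hH.smul ht)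

variable {ι : Type*} [Fintype ι] [DecidableEq ι]

theorem PosDef.trace_inv_mul_sq_mul_sqrt_det_le {g H G : Matrix ι ι ℝ} (hg : g.PosDef)
    (hH : H.PosDef) {t K : ℝ} (ht : 0 < t) (hK : 0 < K) (hlow : t • H ≤ g) (hup : g ≤ K • H) :
    |((g⁻¹ * H) * (g⁻¹ * H)).trace * √((G⁻¹ * g).det)| ≤
      Fintype.card ι * √(K ^ (Fintype.card ι - 1)) * (t⁻¹ * √t⁻¹) * √(H.det / G.det) := by
  obtain ⟨P, hP, hPgP, hginv⟩ := hg.exists_isHermitian_mul_mul_eq_one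
  set B := P * H * P
  have hBpsd : B.PosSemidef := by
    simpa only [hP.eq] using hH.posSemidef.conjTranspose_mul_mul_same P
  have hB : B.IsHermitian := hBpsd.isHermitian
  have hconj : ∀ r : ℝ, P * (r • H) * P = r • B := fun r => by simp [B]
  have hBup : B ≤ t⁻¹ • 1 := by
    have h := hP.isSelfAdjoint.conjugate_le_conjugate hlow
    rw [hconj, hPgP] at h
    simpa [smul_smul, inv_mul_cancel₀ ht.ne'] using
      smul_le_smul_of_nonneg_left h (inv_nonneg.2 ht.le)
  have hBlow : K⁻¹ • 1 ≤ B := by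
    have h := hP.isSelfAdjoint.conjugate_le_conjugate hup
    rw [hconj, hPgP] at h
    simpa [smul_smul, inv_mul_cancel₀ hK.ne'] using
      smul_le_smul_of_nonneg_left h (inv_nonneg.2 hK.le)
  have htrace : ((g⁻¹ * H) * (g⁻¹ * H)).trace = ∑ i, hB.eigenvalues i ^ 2 := by
    have h := hB.trace_mul_self
    simp only [RCLike.ofReal_real_eq_id, id] at h
    rw [← h, hginv, mul_assoc P P, mul_assoc P, trace_mul_comm P]
    simp only [B, mul_assoc]
  have hdetB : B.det = ∏ i, hB.eigenvalues i := by simpa using hB.det_eq_prod_eigenvalues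
  have hdet : (G⁻¹ * g).det = H.det / G.det / B.det := by
    have h := congrArg det hPgP
    rw [det_mul, det_mul, det_one] at h
    rw [det_mul, det_nonsing_inv, Ring.inverse_eq_inv', det_mul, det_mul,
      eq_inv_of_mul_eq_one_right (by linear_combination h : det P * det P * det g = 1)]
    have := hH.det_pos.ne'
    have : det P ≠ 0 := by rintro h0; simp [h0] at h
    field_simp
  have hbound := sum_sq_div_sqrt_prod_le hK (hB.le_eigenvalues_of_smul_one_le hBlow)
    (hB.eigenvalues_le_of_le_smul_one hBup)
  rw [htrace, hdet, Real.sqrt_div' _ hBpsd.det_nonneg, hdetB, mul_div, mul_div_right_comm,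
    abs_of_nonneg (by positivity)]
  exact mul_le_mul_of_nonneg_right hbound (Real.sqrt_nonneg _)

end Matrix

theorem exists_forall_le_smul_of_posDef {X ι : Type*} [TopologicalSpace X] [CompactSpace X]
    [Fintype ι] {A H : X → Matrix ι ι ℝ} (hA : Continuous A) (hH : Continuous H)
    (hAherm : ∀ x, (A x).IsHermitian) (hHpd : ∀ x, (H x).PosDef) :
    ∃ K : ℝ, 0 < K ∧ ∀ x, A x ≤ K • H x := by
  set S := Metric.sphere (0 : ι → ℝ) 1
  have hden : ∀ x, ∀ v ∈ S, v ⬝ᵥ (H x *ᵥ v) ≠ 0 := fun x v hv =>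
    (by simpa using (hHpd x).dotProduct_mulVec_pos (ne_zero_of_mem_sphere one_ne_zero ⟨v, hv⟩) :
      0 < v ⬝ᵥ (H x *ᵥ v)).ne'
  have hcont : ContinuousOn (fun p : X × (ι → ℝ) => p.2 ⬝ᵥ (A p.1 *ᵥ p.2) / p.2 ⬝ᵥ (H p.1 *ᵥ p.2))
      (Set.univ ×ˢ S) := by
    refine ContinuousOn.div (by fun_prop) (by fun_prop) fun p hp => hden p.1 p.2 hp.2
  obtain ⟨M, hM⟩ := (isCompact_univ.prod (isCompact_sphere 0 1)).bddAbove_image hcont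
  have hq : ∀ (B : Matrix ι ι ℝ) (c : ℝ) (u : ι → ℝ),
      (c • u) ⬝ᵥ (B *ᵥ (c • u)) = c ^ 2 * u ⬝ᵥ (B *ᵥ u) := fun B c u => by
    simp only [mulVec_smul, dotProduct_smul, smul_dotProduct, smul_eq_mul]; ring
  refine ⟨max M 1, by positivity, fun x => ?_⟩
  have hquad : ∀ v, v ⬝ᵥ (A x *ᵥ v) ≤ max M 1 * v ⬝ᵥ (H x *ᵥ v) := fun v => by
    rcases eq_or_ne v 0 with rfl | hv
    · simp
    have hu : ‖v‖⁻¹ • v ∈ S := by simp [S, norm_smul, hv]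
    have hpos : 0 < (‖v‖⁻¹ • v) ⬝ᵥ (H x *ᵥ (‖v‖⁻¹ • v)) := by
      simpa using (hHpd x).dotProduct_mulVec_pos (ne_zero_of_mem_sphere one_ne_zero ⟨_, hu⟩)
    have hMu := (div_le_iff₀ hpos).1 (hM ⟨(x, _), ⟨trivial, hu⟩, rfl⟩)
    simp only [hq] at hpos hMu
    have hc : 0 < ‖v‖⁻¹ ^ 2 := by positivity
    have hHv : 0 < v ⬝ᵥ (H x *ᵥ v) := pos_of_mul_pos_right hpos hc.le
    have hAv : v ⬝ᵥ (A x *ᵥ v) ≤ M * v ⬝ᵥ (H x *ᵥ v) :=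
      le_of_mul_le_mul_left (by linarith) hc
    nlinarith [le_max_left M 1]
  rw [Matrix.le_iff]
  refine PosSemidef.of_dotProduct_mulVec_nonneg
    (((hHpd x).isHermitian.smul (IsSelfAdjoint.all _)).sub (hAherm x)) fun v => ?_
  simp only [star_trivial, sub_mulVec, smul_mulVec, dotProduct_sub, dotProduct_smul, smul_eq_mul]
  linarith [hquad v]

section EbinEnergy

variable {X ι : Type*} [Fintype ι] [DecidableEq ι]

-- The `L²` (Ebin) energy density of the velocity `h` at `g₀ + t • h`, against the volume of `g`.
noncomputable def ebinEnergyDensity (g h g₀ : X → Matrix ι ι ℝ) (t : ℝ) (x : X) : ℝ :=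
  (((g₀ x + t • h x)⁻¹ * h x) * ((g₀ x + t • h x)⁻¹ * h x)).trace *
    √(((g x)⁻¹ * (g₀ x + t • h x)).det)

variable [TopologicalSpace X] {g h g₀ : X → Matrix ι ι ℝ}

theorem continuousOn_uncurry_ebinEnergyDensity (hg : Continuous g) (hh : Continuous h)
    (hg₀ : Continuous g₀) (hgdet : ∀ x, (g x).det ≠ 0) (hhP : ∀ x, (h x).PosDef)
    (hg₀P : ∀ x, (g₀ x).PosSemidef) :
    ContinuousOn (Function.uncurry (ebinEnergyDensity g h g₀)) (Ioi 0 ×ˢ univ) := by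
  have hgt : Continuous fun p : ℝ × X => g₀ p.2 + p.1 • h p.2 := by fun_prop
  have hgt_inv := ContinuousOn.matrix_inv hgt.continuousOn
    fun p (hp : p ∈ Ioi 0 ×ˢ univ) => ((hg₀P p.2).add_smul_posDef (hhP p.2) hp.1).det_pos.ne'
  have hg_inv : Continuous fun p : ℝ × X => (g p.2)⁻¹ :=
    (ContinuousOn.matrix_inv hg.continuousOn fun x _ => hgdet x).comp_continuous
      continuous_snd fun p => mem_univ p.2
  have hΦ : Continuous fun q : Matrix ι ι ℝ × Matrix ι ι ℝ × Matrix ι ι ℝ × Matrix ι ι ℝ =>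
      ((q.1 * q.2.1) * (q.1 * q.2.1)).trace * √((q.2.2.1 * q.2.2.2).det) := by fun_prop
  refine (hΦ.comp_continuousOn (hgt_inv.prodMk ((hh.comp continuous_snd).continuousOn.prodMk
    (hg_inv.continuousOn.prodMk hgt.continuousOn)))).congr fun p _ => ?_
  rfl

variable [CompactSpace X] [MeasurableSpace X] (μ : Measure X) [IsFiniteMeasure μ]

theorem continuousOn_integral_ebinEnergyDensity [OpensMeasurableSpace X] (hg : Continuous g)
    (hh : Continuous h) (hg₀ : Continuous g₀) (hgdet : ∀ x, (g x).det ≠ 0)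
    (hhP : ∀ x, (h x).PosDef) (hg₀P : ∀ x, (g₀ x).PosSemidef) :
    ContinuousOn (fun t => ∫ x, ebinEnergyDensity g h g₀ t x ∂μ) (Ioi 0) := by
  simpa using continuousOn_integral_bilinear_of_locally_integrable_of_compact_support
    (ContinuousLinearMap.mul ℝ ℝ) (g := fun _ => (1 : ℝ)) isCompact_univ
    (continuousOn_uncurry_ebinEnergyDensity hg hh hg₀ hgdet hhP hg₀P)
    (fun _ _ _ hx => absurd (mem_univ _) hx) (integrableOn_const (measure_ne_top μ _))

theorem exists_integral_ebinEnergyDensity_le (hg : Continuous g) (hh : Continuous h)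
    (hg₀ : Continuous g₀) (hgdet : ∀ x, (g x).det ≠ 0) (hhP : ∀ x, (h x).PosDef)
    (hg₀P : ∀ x, (g₀ x).PosSemidef) :
    ∃ C, ∀ t ∈ Ioc (0 : ℝ) 1, ∫ x, ebinEnergyDensity g h g₀ t x ∂μ ≤ C * (t⁻¹ * √t⁻¹) := by
  obtain ⟨K, hK, hKle⟩ := exists_forall_le_smul_of_posDef (hg₀.add hh) hh
    (fun x => (hg₀P x).isHermitian.add (hhP x).isHermitian) hhP
  obtain ⟨R, hR⟩ := (isCompact_range (hh.matrix_det.div hg.matrix_det hgdet)).bddAbove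
  set n := Fintype.card ι
  refine ⟨n * √(K ^ (n - 1)) * √R * μ.real univ, fun t ⟨ht0, ht1⟩ => ?_⟩
  have hpt (x : X) :
      ‖ebinEnergyDensity g h g₀ t x‖ ≤ n * √(K ^ (n - 1)) * (t⁻¹ * √t⁻¹) * √R := by
    have hlow : t • h x ≤ g₀ x + t • h x := le_add_of_nonneg_left (hg₀P x).nonneg
    have hup : g₀ x + t • h x ≤ K • h x :=
      (add_le_add_right (smul_le_of_le_one_left (hhP x).posSemidef.nonneg ht1) _).trans (hKle x)
    refine (((hg₀P x).add_smul_posDef (hhP x) ht0).trace_inv_mul_sq_mul_sqrt_det_le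
      (hhP x) ht0 hK hlow hup).trans ?_
    gcongr
    exact hR ⟨x, rfl⟩
  calc _ ≤ _ := le_abs_self _
    _ ≤ _ := norm_integral_le_of_norm_le_const (ae_of_all _ hpt)
    _ = _ := by ring

end EbinEnergy

theorem stmt_13_general {X : Type*} [TopologicalSpace X] [CompactSpace X]
    [MeasurableSpace X] [BorelSpace X] (μ : Measure X) [IsFiniteMeasure μ]
    (n : ℕ) (g h g₀ : X → Mat n)
    (hg : Continuous g) (hh : Continuous h) (hg₀ : Continuous g₀)
    (hgP : ∀ x, InP n (g x)) (hhP : ∀ x, InP n (h x))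
    (hg₀P : ∀ x, (g₀ x).PosSemidef) :
    IntegrableOn
      (fun t : ℝ => Real.sqrt (∫ x,
        (((g₀ x + t • h x)⁻¹ * h x) * ((g₀ x + t • h x)⁻¹ * h x)).trace *
          Real.sqrt (((g x)⁻¹ * (g₀ x + t • h x)).det) ∂μ))
      (Set.Ioc (0:ℝ) 1) MeasureTheory.volume := by
  have hgdet : ∀ x, (g x).det ≠ 0 := fun x => (hgP x).2.det_pos.ne'
  have hhP' : ∀ x, (h x).PosDef := fun x => (hhP x).2
  obtain ⟨C, hC⟩ := exists_integral_ebinEnergyDensity_le μ hg hh hg₀ hgdet hhP' hg₀P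
  exact integrableOn_Ioc_sqrt_of_le ((continuousOn_integral_ebinEnergyDensity μ hg hh hg₀ hgdet
    hhP' hg₀P).mono Ioc_subset_Ioi_self) hC

/-- Let `X` be a compact space with a finite Borel measure `μ`, `g, h : X → Pₙ`
continuous, and `g₀ : X → Sₙ` continuous with positive semidefinite values.  For
`t ∈ (0,1]` set `g_t(x) := g₀(x) + t h(x)`.  Then the improper integral
`∫₀¹ (∫_X tr((g_t(x)⁻¹ h(x))²) √(det (g(x)⁻¹ g_t(x))) dμ(x))^{1/2} dt` is finite,
i.e. the integrand is integrable on `(0,1]`. -/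
theorem stmt_13 {X : Type*} [TopologicalSpace X] [CompactSpace X]
    [MeasurableSpace X] [BorelSpace X] (μ : Measure X) [IsFiniteMeasure μ]
    (n : ℕ) (hn : 1 ≤ n) (g h g₀ : X → Mat n)
    (hg : Continuous g) (hh : Continuous h) (hg₀ : Continuous g₀)
    (hgP : ∀ x, InP n (g x)) (hhP : ∀ x, InP n (h x))
    (hg₀S : ∀ x, (g₀ x).IsSymm) (hg₀P : ∀ x, (g₀ x).PosSemidef) :
    IntegrableOn
      (fun t : ℝ => Real.sqrt (∫ x,
        (((g₀ x + t • h x)⁻¹ * h x) * ((g₀ x + t • h x)⁻¹ * h x)).trace *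
          Real.sqrt (((g x)⁻¹ * (g₀ x + t • h x)).det) ∂μ))
      (Set.Ioc (0:ℝ) 1) MeasureTheory.volume :=
  stmt_13_general μ n g h g₀ hg hh hg₀ hgP hhP hg₀P
end
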